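/- Soundness and completeness of IEL⁻ and IEL with respect to relational semantics: a formula φ ∈ Fm_e is a theorem of IEL⁻ (respectively, of IEL) if and only if φ is true in all relational IEL⁻-models (respectively, in all relational IEL-models), where truth in a relational model means satisfaction at the bottom world w_⊥. -/

import Mathlib

/-- The raw data of an intuitionistic general frame: worlds, an accessibility
relation, a set `P` of propositions, a belief function `E` and a bottom world. -/
structure Frame (W : Type*) where
  R : W → W → Prop
  P : Set (Set W)
  E : W → Set (Set W)
  wbot : W

/-- The operation `A ⊃ B` on propositions. -/
def Frame.himp {W : Type*} (F : Frame W) (A B : Set W) : Set W :=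
  {w | ∀ w', F.R w w' → w' ∈ A → w' ∈ B}

/-- The operation `KA = {w | A ∈ E(w)}` on propositions. -/
def Frame.kset {W : Type*} (F : Frame W) (A : Set W) : Set W :=
  {w | A ∈ F.E w}

/-- `w` is an `R`-maximal world. -/
def Frame.IsMaxW {W : Type*} (F : Frame W) (w : W) : Prop :=
  ∀ w', F.R w w' → w' = w

/-- The basic frame conditions (of an `EL5⁻`-frame, except for the designated
maximal world): `R` is a partial order with least element `wbot` in which every
`R`-chain has an upper bound; `P` consists of upper sets, contains `∅` and `W`
and is closed under `∩`, `∪`, `⊃` and `K`; each `E(w)` is a filter on `P`; and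
`E` is monotone. -/
def IsBaseFrame {W : Type*} (F : Frame W) : Prop :=
  (∀ w, F.R w w) ∧
  (∀ ⦃w w' w''⦄, F.R w w' → F.R w' w'' → F.R w w'') ∧
  (∀ ⦃w w'⦄, F.R w w' → F.R w' w → w = w') ∧
  (∀ w, F.R F.wbot w) ∧
  (∀ C : Set W, IsChain F.R C → ∃ ub, ∀ w ∈ C, F.R w ub) ∧
  (∀ A ∈ F.P, ∀ ⦃w w'⦄, F.R w w' → w ∈ A → w' ∈ A) ∧
  (∅ : Set W) ∈ F.P ∧
  (Set.univ : Set W) ∈ F.P ∧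
  (∀ A ∈ F.P, ∀ B ∈ F.P, A ∩ B ∈ F.P) ∧
  (∀ A ∈ F.P, ∀ B ∈ F.P, A ∪ B ∈ F.P) ∧
  (∀ A ∈ F.P, ∀ B ∈ F.P, F.himp A B ∈ F.P) ∧
  (∀ A ∈ F.P, F.kset A ∈ F.P) ∧
  (∀ w, F.E w ⊆ F.P) ∧
  (∀ w, (F.E w).Nonempty) ∧
  (∀ w, ∀ A ∈ F.E w, ∀ B ∈ F.E w, A ∩ B ∈ F.E w) ∧
  (∀ w, ∀ A ∈ F.E w, ∀ B ∈ F.P, A ⊆ B → B ∈ F.E w) ∧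
  (∀ ⦃w w'⦄, F.R w w' → F.E w ⊆ F.E w')

/-- The `E4L5⁻`-frame condition: `A ∈ E(w)` implies `KA ∈ E(w)`. -/
def E4Cond {W : Type*} (F : Frame W) : Prop :=
  ∀ w, ∀ A ∈ F.P, A ∈ F.E w → F.kset A ∈ F.E w

/-- The `E5L5⁻`-frame condition: if `A ∉ E(w')` for all `w' ≥ w`,
then `(KA ⊃ ∅) ∈ E(w)`. -/
def E5Cond {W : Type*} (F : Frame W) : Prop :=
  ∀ w, ∀ A ∈ F.P, (∀ w', F.R w w' → A ∉ F.E w') → F.himp (F.kset A) ∅ ∈ F.E w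

/-- The `E6L5⁻`-frame condition: `E` is constant, i.e. `E(w) = E(wbot)` for all `w`. -/
def E6Cond {W : Type*} (F : Frame W) : Prop :=
  ∀ w, F.E w = F.E F.wbot

/-- The knowledge condition of `EkL5`-frames: every believed proposition
contains all accessible maximal worlds. -/
def KnowCond {W : Type*} (F : Frame W) : Prop :=
  ∀ w, ∀ A ∈ F.E w, ∀ w', F.R w w' → F.IsMaxW w' → w' ∈ A

/-- The condition (IntCo) of intuitionistic co-reflection: `w ∈ A` implies `A ∈ E(w)`. -/
def IntCoCond {W : Type*} (F : Frame W) : Prop :=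
  ∀ w, ∀ A ∈ F.P, w ∈ A → A ∈ F.E w

/-- An `IEL⁻`-frame: the basic frame conditions (no designated maximal world)
together with (IntCo). -/
def IsIELmFrame {W : Type*} (F : Frame W) : Prop := IsBaseFrame F ∧ IntCoCond F

/-- An `IEL`-frame: an `IEL⁻`-frame in which every believed proposition contains
all accessible maximal worlds. -/
def IsIELFrame {W : Type*} (F : Frame W) : Prop := IsIELmFrame F ∧ KnowCond F

/-- A frame with a designated world `wT`. -/
structure EFrame (W : Type*) extends Frame W where
  wT : W

/-- An `EL5⁻`-frame: the basic frame conditions together with maximality of the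
designated world `wT`. -/
def IsEL5mFrame {W : Type*} (F : EFrame W) : Prop :=
  IsBaseFrame F.toFrame ∧ F.toFrame.IsMaxW F.wT
/-- Formulas of the pure epistemic language `Fm_e` (no `□`). -/
inductive FmE : Type
  | var : Nat → FmE
  | bot : FmE
  | and : FmE → FmE → FmE
  | or : FmE → FmE → FmE
  | imp : FmE → FmE → FmE
  | k : FmE → FmE

namespace FmE

def neg (φ : FmE) : FmE := φ.imp FmE.bot

end FmE

/-- Hilbert-style axiom schemes for IPC over the epistemic language `Fm_e`
(instantiated over all formulas, so that together with closure under MP this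
yields all substitution-instances of theorems of IPC). -/
inductive IPCAxE : FmE → Prop
  | k1 (φ ψ : FmE) : IPCAxE (φ.imp (ψ.imp φ))
  | k2 (φ ψ χ : FmE) : IPCAxE ((φ.imp (ψ.imp χ)).imp ((φ.imp ψ).imp (φ.imp χ)))
  | andI (φ ψ : FmE) : IPCAxE (φ.imp (ψ.imp (φ.and ψ)))
  | andE1 (φ ψ : FmE) : IPCAxE ((φ.and ψ).imp φ)
  | andE2 (φ ψ : FmE) : IPCAxE ((φ.and ψ).imp ψ)
  | orI1 (φ ψ : FmE) : IPCAxE (φ.imp (φ.or ψ))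
  | orI2 (φ ψ : FmE) : IPCAxE (ψ.imp (φ.or ψ))
  | orE (φ ψ χ : FmE) : IPCAxE ((φ.imp χ).imp ((ψ.imp χ).imp ((φ.or ψ).imp χ)))
  | efq (φ : FmE) : IPCAxE (FmE.bot.imp φ)

/-- Theorems of `IEL⁻` (for `re := False`) and of `IEL` (for `re := True`):
intuitionistic propositional logic plus (KBel) `K(φ→ψ)→(Kφ→Kψ)`, intuitionistic
co-reflection `φ→Kφ` and — in the case of `IEL` — intuitionistic reflection
`Kφ→¬¬φ`; Modus Ponens is the only rule. -/
inductive IELThm (re : Prop) : FmE → Prop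
  | ipc {φ : FmE} : IPCAxE φ → IELThm re φ
  | kbel (φ ψ : FmE) : IELThm re ((FmE.k (φ.imp ψ)).imp ((FmE.k φ).imp (FmE.k ψ)))
  | core (φ : FmE) : IELThm re (φ.imp (FmE.k φ))
  | intre (φ : FmE) : re → IELThm re ((FmE.k φ).imp (FmE.neg (FmE.neg φ)))
  | mp {φ ψ : FmE} : IELThm re (φ.imp ψ) → IELThm re φ → IELThm re ψ

/-- Interpretation of epistemic formulas in a frame: `interpFmE F g φ = φ*`. -/
def interpFmE {W : Type*} (F : Frame W) (g : Nat → Set W) : FmE → Set W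
  | .var n => g n
  | .bot => ∅
  | .and φ ψ => interpFmE F g φ ∩ interpFmE F g ψ
  | .or φ ψ => interpFmE F g φ ∪ interpFmE F g ψ
  | .imp φ ψ => F.himp (interpFmE F g φ) (interpFmE F g ψ)
  | .k φ => {w | interpFmE F g φ ∈ F.E w}


/-!
Soundness is an induction on derivations. The one non-local case is intuitionistic reflection:
since chains have upper bounds, Zorn's lemma gives an `R`-maximal world above any world, and the
knowledge condition puts it inside every believed proposition, so `Kφ` refutes `¬φ`.

Completeness goes through a rooted canonical model. If `⊬ φ`, Lindenbaum's lemma yields a prime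
theory `Γ₀ ∌ φ`. The worlds are the prime theories extending `Γ₀`, ordered by inclusion, the
propositions are the truth sets `{Δ | ψ ∈ Δ}`, and `E(Δ)` consists of the truth sets of the `ψ`
with `Kψ ∈ Δ`; formulas with equal truth sets are provably equivalent over `Γ₀`, so by (KBel)
this does not depend on the choice of `ψ`, and co-reflection `ψ → Kψ` is (IntCo). For `IEL`, a
maximal world containing `Kψ` contains `¬¬ψ`, so it is consistent with `ψ` and hence contains `ψ`.
-/

variable {re : Prop}

section Soundness

variable {W : Type*} {F : Frame W} {g : Nat → Set W}

theorem interpFmE_mem_P (hF : IsBaseFrame F) (hg : ∀ n, g n ∈ F.P) (φ : FmE) :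
    interpFmE F g φ ∈ F.P := by
  obtain ⟨-, -, -, -, -, -, hbot, -, hinter, hunion, himp, hk, -⟩ := hF
  induction φ with
  | var n => exact hg n
  | bot => exact hbot
  | and _ _ ih₁ ih₂ => exact hinter _ ih₁ _ ih₂
  | or _ _ ih₁ ih₂ => exact hunion _ ih₁ _ ih₂
  | imp _ _ ih₁ ih₂ => exact himp _ ih₁ _ ih₂
  | k _ ih => exact hk _ ih

theorem interpFmE_of_R (hF : IsBaseFrame F) (hg : ∀ n, g n ∈ F.P) (φ : FmE) {w w' : W}
    (hR : F.R w w') (hw : w ∈ interpFmE F g φ) : w' ∈ interpFmE F g φ := by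
  have hP := interpFmE_mem_P hF hg φ
  obtain ⟨-, -, -, -, -, hupper, -⟩ := hF
  exact hupper _ hP hR hw

theorem IsBaseFrame.exists_R_isMaxW (hF : IsBaseFrame F) (w : W) :
    ∃ m, F.R w m ∧ F.IsMaxW m := by
  obtain ⟨hrefl, htrans, hanti, -, hchain, -⟩ := hF
  let _ : PartialOrder W :=
    { le := F.R, le_refl := hrefl, le_trans := @htrans, le_antisymm := @hanti }
  obtain ⟨m, hwm, hm⟩ := zorn_le_nonempty₀ {v | F.R w v}
    (fun c hcw hc y hy =>
      let ⟨ub, hub⟩ := hchain c hc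
      ⟨ub, htrans (hcw hy) (hub y hy), hub⟩)
    w (hrefl w)
  exact ⟨m, hwm, fun v hmv => (hm.eq_of_le (htrans hm.1 hmv) hmv).symm⟩

theorem IPCAxE.mem_interpFmE (hF : IsBaseFrame F) (hg : ∀ n, g n ∈ F.P) {φ : FmE}
    (h : IPCAxE φ) (w : W) : w ∈ interpFmE F g φ := by
  have hrefl := hF.1
  have htrans := hF.2.1
  cases h with
  | k1 φ _ => exact fun w₁ _ h₁ w₂ h₂ _ => interpFmE_of_R hF hg φ h₂ h₁
  | k2 =>
    exact fun w₁ _ h₁ w₂ h₂ h₁₂ w₃ h₃ hφ =>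
      h₁ w₃ (htrans h₂ h₃) hφ w₃ (hrefl w₃) (h₁₂ w₃ h₃ hφ)
  | andI φ _ => exact fun w₁ _ h₁ w₂ h₂ hψ => ⟨interpFmE_of_R hF hg φ h₂ h₁, hψ⟩
  | andE1 => exact fun _ _ h => h.1
  | andE2 => exact fun _ _ h => h.2
  | orI1 => exact fun _ _ h => Or.inl h
  | orI2 => exact fun _ _ h => Or.inr h
  | orE =>
    exact fun w₁ _ h₁ w₂ h₂ h₁₂ w₃ h₃ hor =>
      hor.elim (h₁ w₃ (htrans h₂ h₃)) (h₁₂ w₃ h₃)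
  | efq => exact fun _ _ h => h.elim

theorem IELThm.mem_interpFmE (hF : IsIELmFrame F) (hK : re → KnowCond F)
    (hg : ∀ n, g n ∈ F.P) {φ : FmE} (h : IELThm re φ) (w : W) : w ∈ interpFmE F g φ := by
  obtain ⟨hbase, hco⟩ := hF
  have ⟨hrefl, _, _, _, _, _, _, _, _, _, _, _, _, _, hEinter, hEup, hEmono⟩ := hbase
  have hP := interpFmE_mem_P hbase hg
  induction h generalizing w with
  | ipc hax => exact hax.mem_interpFmE hbase hg w
  | kbel _ ψ =>
    intro w₁ _ h₁ w₂ h₂ hφ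
    exact hEup w₂ _ (hEinter w₂ _ (hEmono h₂ h₁) _ hφ) _ (hP ψ)
      fun v hv => hv.1 v (hrefl v) hv.2
  | core φ => exact fun w₁ _ h₁ => hco w₁ _ (hP φ) h₁
  | intre _ hre =>
    intro w₁ _ h₁ w₂ h₂ hnφ
    obtain ⟨m, hm, hmax⟩ := hbase.exists_R_isMaxW w₂
    exact hnφ m hm (hK hre w₂ _ (hEmono h₂ h₁) m hm hmax)
  | mp _ _ ih₁ ih₂ => exact ih₁ w w (hrefl w) (ih₂ w)

end Soundness

inductive IELDeriv (re : Prop) (Γ : Set FmE) : FmE → Prop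
  | ax {φ : FmE} : φ ∈ Γ → IELDeriv re Γ φ
  | thm {φ : FmE} : IELThm re φ → IELDeriv re Γ φ
  | mp {φ ψ : FmE} : IELDeriv re Γ (φ.imp ψ) → IELDeriv re Γ φ → IELDeriv re Γ ψ

theorem IELThm.imp_self (φ : FmE) : IELThm re (φ.imp φ) :=
  .mp (.mp (.ipc (.k2 φ (φ.imp φ) φ)) (.ipc (.k1 _ _))) (.ipc (.k1 _ _))

theorem ielDeriv_empty_iff {φ : FmE} : IELDeriv re ∅ φ ↔ IELThm re φ := by
  refine ⟨fun h => ?_, .thm⟩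
  induction h with
  | ax h => exact absurd h (Set.notMem_empty _)
  | thm h => exact h
  | mp _ _ ih₁ ih₂ => exact .mp ih₁ ih₂

namespace IELDeriv

variable {Γ Γ' : Set FmE} {φ ψ χ : FmE}

theorem mono (h : IELDeriv re Γ φ) (hΓ : Γ ⊆ Γ') : IELDeriv re Γ' φ := by
  induction h with
  | ax h => exact .ax (hΓ h)
  | thm h => exact .thm h
  | mp _ _ ih₁ ih₂ => exact .mp ih₁ ih₂

theorem deduction (h : IELDeriv re (insert φ Γ) ψ) : IELDeriv re Γ (φ.imp ψ) := by
  induction h with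
  | @ax χ h =>
    rcases h with rfl | h
    · exact .thm (.imp_self _)
    · exact .mp (.thm (.ipc (.k1 χ φ))) (.ax h)
  | @thm χ h => exact .mp (.thm (.ipc (.k1 χ φ))) (.thm h)
  | @mp α β _ _ ih₁ ih₂ => exact .mp (.mp (.thm (.ipc (.k2 φ α β))) ih₁) ih₂

theorem cut (h : IELDeriv re Γ φ) (h' : IELDeriv re (insert φ Γ) ψ) : IELDeriv re Γ ψ :=
  .mp (deduction h') h

theorem of_or (h : IELDeriv re Γ (φ.or ψ)) (hφ : IELDeriv re (insert φ Γ) χ)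
    (hψ : IELDeriv re (insert ψ Γ) χ) : IELDeriv re Γ χ :=
  .mp (.mp (.mp (.thm (.ipc (.orE φ ψ χ))) (deduction hφ)) (deduction hψ)) h

theorem core (h : IELDeriv re Γ φ) : IELDeriv re Γ (.k φ) :=
  .mp (.thm (.core φ)) h

theorem kbel (hK : IELDeriv re Γ (.k (φ.imp ψ))) (h : IELDeriv re Γ (.k φ)) :
    IELDeriv re Γ (.k ψ) :=
  .mp (.mp (.thm (.kbel φ ψ)) hK) h

theorem k_and (hφ : IELDeriv re Γ (.k φ)) (hψ : IELDeriv re Γ (.k ψ)) :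
    IELDeriv re Γ (.k (φ.and ψ)) :=
  kbel (kbel (core (.thm (.ipc (.andI φ ψ)))) hφ) hψ

theorem exists_of_sUnion {C : Set (Set FmE)} (hC : IsChain (· ⊆ ·) C) (hne : C.Nonempty)
    (h : IELDeriv re (⋃₀ C) φ) : ∃ Δ ∈ C, IELDeriv re Δ φ := by
  induction h with
  | ax h =>
    obtain ⟨Δ, hΔ, hφ⟩ := Set.mem_sUnion.1 h
    exact ⟨Δ, hΔ, .ax hφ⟩
  | thm h => exact ⟨hne.some, hne.some_mem, .thm h⟩
  | mp _ _ ih₁ ih₂ =>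
    obtain ⟨Δ₁, hΔ₁, d₁⟩ := ih₁
    obtain ⟨Δ₂, hΔ₂, d₂⟩ := ih₂
    rcases hC.total hΔ₁ hΔ₂ with h | h
    · exact ⟨Δ₂, hΔ₂, .mp (d₁.mono h) d₂⟩
    · exact ⟨Δ₁, hΔ₁, .mp d₁ (d₂.mono h)⟩

end IELDeriv

structure IsPrimeTheory (re : Prop) (Δ : Set FmE) : Prop where
  mem_of_deriv {φ : FmE} : IELDeriv re Δ φ → φ ∈ Δ
  bot_notMem : FmE.bot ∉ Δ
  mem_or_mem {φ ψ : FmE} : φ.or ψ ∈ Δ → φ ∈ Δ ∨ ψ ∈ Δ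

namespace IsPrimeTheory

variable {Γ Δ : Set FmE} {θ : FmE}

theorem sUnion {C : Set (Set FmE)} (hC : IsChain (· ⊆ ·) C) (hne : C.Nonempty)
    (hprime : ∀ Δ ∈ C, IsPrimeTheory re Δ) : IsPrimeTheory re (⋃₀ C) where
  mem_of_deriv h := by
    obtain ⟨Δ, hΔ, d⟩ := IELDeriv.exists_of_sUnion hC hne h
    exact Set.mem_sUnion_of_mem ((hprime Δ hΔ).mem_of_deriv d) hΔ
  bot_notMem h := by
    obtain ⟨Δ, hΔ, hbot⟩ := Set.mem_sUnion.1 h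
    exact (hprime Δ hΔ).bot_notMem hbot
  mem_or_mem h := by
    obtain ⟨Δ, hΔ, hor⟩ := Set.mem_sUnion.1 h
    exact ((hprime Δ hΔ).mem_or_mem hor).imp (Set.mem_sUnion_of_mem · hΔ)
      (Set.mem_sUnion_of_mem · hΔ)

theorem of_maximal (hΔ : Maximal (fun Δ => Γ ⊆ Δ ∧ ¬ IELDeriv re Δ θ) Δ) :
    IsPrimeTheory re Δ := by
  have hinsert : ∀ {φ}, φ ∉ Δ → IELDeriv re (insert φ Δ) θ := fun hφ => by
    by_contra h
    exact hφ (hΔ.mem_of_prop_insert ⟨hΔ.1.1.trans (Set.subset_insert _ _), h⟩)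
  have hθ := hΔ.1.2
  refine ⟨fun {φ} h => ?_, fun h => hθ (.mp (.thm (.ipc (.efq θ))) (.ax h)), fun {φ ψ} h => ?_⟩
  · by_contra hφ
    exact hθ (h.cut (hinsert hφ))
  · by_contra! hφψ
    exact hθ ((IELDeriv.ax h).of_or (hinsert hφψ.1) (hinsert hφψ.2))

theorem exists_superset_of_not_deriv (h : ¬ IELDeriv re Γ θ) :
    ∃ Δ, Γ ⊆ Δ ∧ IsPrimeTheory re Δ ∧ θ ∉ Δ := by
  obtain ⟨Δ, -, hΔ⟩ := zorn_subset_nonempty {Δ | Γ ⊆ Δ ∧ ¬ IELDeriv re Δ θ}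
    (fun C hCS hC hne => by
      refine ⟨⋃₀ C, ⟨?_, fun hd => ?_⟩, fun _ => Set.subset_sUnion_of_mem⟩
      · exact (hCS hne.some_mem).1.trans (Set.subset_sUnion_of_mem hne.some_mem)
      · obtain ⟨Δ, hΔ, d⟩ := IELDeriv.exists_of_sUnion hC hne hd
        exact (hCS hΔ).2 d)
    Γ ⟨subset_rfl, h⟩
  exact ⟨Δ, hΔ.1.1, of_maximal hΔ, fun hθ => hΔ.1.2 (.ax hθ)⟩

end IsPrimeTheory

def CanonicalWorld (re : Prop) (Γ₀ : Set FmE) : Type :=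
  {Δ : Set FmE // IsPrimeTheory re Δ ∧ Γ₀ ⊆ Δ}

def truthSet (re : Prop) (Γ₀ : Set FmE) (φ : FmE) : Set (CanonicalWorld re Γ₀) :=
  {Δ | φ ∈ Δ.1}

def canonicalFrame {Γ₀ : Set FmE} (h₀ : IsPrimeTheory re Γ₀) : Frame (CanonicalWorld re Γ₀) where
  R Δ Δ' := Δ.1 ⊆ Δ'.1
  P := Set.range (truthSet re Γ₀)
  E Δ := truthSet re Γ₀ '' {φ | FmE.k φ ∈ Δ.1}
  wbot := ⟨Γ₀, h₀, subset_rfl⟩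

namespace CanonicalWorld

variable {Γ₀ : Set FmE} {φ ψ : FmE}

theorem mem_of_deriv (Δ : CanonicalWorld re Γ₀) (h : IELDeriv re Δ.1 φ) : φ ∈ Δ.1 :=
  Δ.2.1.mem_of_deriv h

theorem exists_extension (Δ : CanonicalWorld re Γ₀) (h : ¬ IELDeriv re (insert φ Δ.1) ψ) :
    ∃ Δ' : CanonicalWorld re Γ₀, insert φ Δ.1 ⊆ Δ'.1 ∧ ψ ∉ Δ'.1 := by
  obtain ⟨Δ', hsub, hprime, hψ⟩ := IsPrimeTheory.exists_superset_of_not_deriv h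
  exact ⟨⟨Δ', hprime, Δ.2.2.trans ((Set.subset_insert _ _).trans hsub)⟩, hsub, hψ⟩

end CanonicalWorld

section Canonical

variable {Γ₀ : Set FmE} (h₀ : IsPrimeTheory re Γ₀) {φ ψ : FmE}

theorem truthSet_bot : truthSet re Γ₀ .bot = ∅ :=
  Set.eq_empty_of_forall_notMem fun Δ => Δ.2.1.bot_notMem

theorem truthSet_imp_self : truthSet re Γ₀ (φ.imp φ) = Set.univ :=
  Set.eq_univ_of_forall fun Δ => Δ.mem_of_deriv (.thm (.imp_self φ))

theorem truthSet_and : truthSet re Γ₀ (φ.and ψ) = truthSet re Γ₀ φ ∩ truthSet re Γ₀ ψ := by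
  ext Δ
  refine ⟨fun h => ⟨?_, ?_⟩, fun ⟨hφ, hψ⟩ => ?_⟩
  · exact Δ.mem_of_deriv (.mp (.thm (.ipc (.andE1 φ ψ))) (.ax h))
  · exact Δ.mem_of_deriv (.mp (.thm (.ipc (.andE2 φ ψ))) (.ax h))
  · exact Δ.mem_of_deriv (.mp (.mp (.thm (.ipc (.andI φ ψ))) (.ax hφ)) (.ax hψ))

theorem truthSet_or : truthSet re Γ₀ (φ.or ψ) = truthSet re Γ₀ φ ∪ truthSet re Γ₀ ψ := by
  ext Δ
  refine ⟨Δ.2.1.mem_or_mem, ?_⟩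
  rintro (h | h)
  · exact Δ.mem_of_deriv (.mp (.thm (.ipc (.orI1 φ ψ))) (.ax h))
  · exact Δ.mem_of_deriv (.mp (.thm (.ipc (.orI2 φ ψ))) (.ax h))

theorem himp_truthSet :
    (canonicalFrame h₀).himp (truthSet re Γ₀ φ) (truthSet re Γ₀ ψ) = truthSet re Γ₀ (φ.imp ψ) := by
  ext Δ
  refine ⟨fun h => Δ.mem_of_deriv (.deduction ?_), fun h Δ' hΔ' hφ => ?_⟩
  · by_contra hd
    obtain ⟨Δ', hsub, hψ⟩ := Δ.exists_extension hd
    exact hψ (h Δ' ((Set.subset_insert _ _).trans hsub) (hsub (Set.mem_insert _ _)))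
  · exact Δ'.mem_of_deriv (.mp (.ax (hΔ' h)) (.ax hφ))

include h₀ in
theorem imp_mem_of_truthSet_subset (h : truthSet re Γ₀ φ ⊆ truthSet re Γ₀ ψ)
    (Δ : CanonicalWorld re Γ₀) : φ.imp ψ ∈ Δ.1 := by
  have hbot : (canonicalFrame h₀).wbot ∈ (canonicalFrame h₀).himp (truthSet re Γ₀ φ)
      (truthSet re Γ₀ ψ) := fun _ _ hφ => h hφ
  rw [himp_truthSet] at hbot
  exact Δ.2.2 hbot

include h₀ in
theorem k_mem_of_truthSet_subset (h : truthSet re Γ₀ φ ⊆ truthSet re Γ₀ ψ)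
    {Δ : CanonicalWorld re Γ₀} (hK : FmE.k φ ∈ Δ.1) : FmE.k ψ ∈ Δ.1 :=
  Δ.mem_of_deriv ((IELDeriv.ax (imp_mem_of_truthSet_subset h₀ h Δ)).core.kbel (.ax hK))

theorem kset_truthSet :
    (canonicalFrame h₀).kset (truthSet re Γ₀ φ) = truthSet re Γ₀ (.k φ) := by
  ext Δ
  exact ⟨fun ⟨_, hψ, heq⟩ => k_mem_of_truthSet_subset h₀ heq.le hψ, fun h => ⟨φ, h, rfl⟩⟩

theorem interpFmE_canonicalFrame (φ : FmE) :
    interpFmE (canonicalFrame h₀) (fun n => truthSet re Γ₀ (.var n)) φ = truthSet re Γ₀ φ := by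
  induction φ with
  | var n => rfl
  | bot => exact truthSet_bot.symm
  | and φ ψ ih₁ ih₂ => rw [interpFmE, ih₁, ih₂, truthSet_and]
  | or φ ψ ih₁ ih₂ => rw [interpFmE, ih₁, ih₂, truthSet_or]
  | imp φ ψ ih₁ ih₂ => rw [interpFmE, ih₁, ih₂, himp_truthSet]
  | k φ ih => exact (congrArg _ ih).trans (kset_truthSet h₀)

theorem canonicalFrame_chain_bounded (C : Set (CanonicalWorld re Γ₀))
    (hC : IsChain (canonicalFrame h₀).R C) : ∃ ub, ∀ Δ ∈ C, (canonicalFrame h₀).R Δ ub := by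
  rcases C.eq_empty_or_nonempty with rfl | hne
  · exact ⟨(canonicalFrame h₀).wbot, fun _ h => absurd h (Set.notMem_empty _)⟩
  have hC' : IsChain (· ⊆ ·) (Subtype.val '' C) :=
    hC.image_of_map_rel (canonicalFrame h₀).R (fun A B : Set FmE => A ⊆ B) Subtype.val
      fun _ _ h => h
  have hne' := hne.image Subtype.val
  refine ⟨⟨⋃₀ (Subtype.val '' C), IsPrimeTheory.sUnion hC' hne' ?_, ?_⟩, ?_⟩
  · rintro _ ⟨Δ, -, rfl⟩
    exact Δ.2.1
  · exact hne.some.2.2.trans (Set.subset_sUnion_of_mem (Set.mem_image_of_mem _ hne.some_mem))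
  · exact fun Δ hΔ => Set.subset_sUnion_of_mem (Set.mem_image_of_mem _ hΔ)

theorem isIELmFrame_canonicalFrame : IsIELmFrame (canonicalFrame h₀) := by
  refine ⟨⟨fun _ => subset_rfl, fun _ _ _ => subset_trans,
    fun _ _ h₁ h₂ => Subtype.ext (h₁.antisymm h₂), fun Δ => Δ.2.2,
    canonicalFrame_chain_bounded h₀, ?_, ⟨.bot, truthSet_bot⟩,
    ⟨FmE.bot.imp .bot, truthSet_imp_self⟩, ?_, ?_, ?_, ?_, ?_, ?_, ?_, ?_, ?_⟩, ?_⟩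
  · rintro _ ⟨φ, rfl⟩ _ _ hR h
    exact hR h
  · rintro _ ⟨φ, rfl⟩ _ ⟨ψ, rfl⟩
    exact ⟨φ.and ψ, truthSet_and⟩
  · rintro _ ⟨φ, rfl⟩ _ ⟨ψ, rfl⟩
    exact ⟨φ.or ψ, truthSet_or⟩
  · rintro _ ⟨φ, rfl⟩ _ ⟨ψ, rfl⟩
    exact ⟨φ.imp ψ, (himp_truthSet h₀).symm⟩
  · rintro _ ⟨φ, rfl⟩
    exact ⟨.k φ, (kset_truthSet h₀).symm⟩
  · exact fun Δ => Set.image_subset_range _ _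
  · exact fun Δ => ⟨_, ⟨FmE.bot.imp .bot, Δ.mem_of_deriv (.core (.thm (.imp_self _))), rfl⟩⟩
  · rintro Δ _ ⟨φ, hφ, rfl⟩ _ ⟨ψ, hψ, rfl⟩
    exact ⟨φ.and ψ, Δ.mem_of_deriv (.k_and (.ax hφ) (.ax hψ)), truthSet_and⟩
  · rintro Δ _ ⟨φ, hφ, rfl⟩ _ ⟨ψ, rfl⟩ hsub
    exact ⟨ψ, k_mem_of_truthSet_subset h₀ hsub hφ, rfl⟩
  · rintro Δ Δ' hR _ ⟨φ, hφ, rfl⟩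
    exact ⟨φ, hR hφ, rfl⟩
  · rintro Δ _ ⟨φ, rfl⟩ hφ
    exact ⟨φ, Δ.mem_of_deriv (.core (.ax hφ)), rfl⟩

theorem knowCond_canonicalFrame (hre : re) : KnowCond (canonicalFrame h₀) := by
  rintro Δ _ ⟨φ, hK, rfl⟩ Δ' hR hmax
  by_cases hd : IELDeriv re (insert φ Δ'.1) .bot
  · exfalso
    have hnnφ : IELDeriv re Δ'.1 φ.neg.neg := .mp (.thm (.intre φ hre)) (.ax (hR hK))
    exact Δ'.2.1.bot_notMem (Δ'.mem_of_deriv (.mp hnnφ hd.deduction))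
  · obtain ⟨Δ'', hsub, -⟩ := Δ'.exists_extension hd
    rw [← hmax Δ'' ((Set.subset_insert _ _).trans hsub)]
    exact hsub (Set.mem_insert _ _)

end Canonical

theorem IELThm.of_forall_frame {φ : FmE}
    (h : ∀ (W : Type) (F : Frame W) (g : Nat → Set W),
      IsIELmFrame F → (re → KnowCond F) → (∀ n, g n ∈ F.P) → F.wbot ∈ interpFmE F g φ) :
    IELThm re φ := by
  by_contra hφ
  obtain ⟨Γ₀, -, h₀, hφΓ₀⟩ :=
    IsPrimeTheory.exists_superset_of_not_deriv (mt ielDeriv_empty_iff.1 hφ)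
  have hvalid := h _ (canonicalFrame h₀) _ (isIELmFrame_canonicalFrame h₀)
    (knowCond_canonicalFrame h₀) (fun n => ⟨.var n, rfl⟩)
  rw [interpFmE_canonicalFrame] at hvalid
  exact hφΓ₀ hvalid

theorem ielThm_iff_forall_frame {φ : FmE} :
    IELThm re φ ↔ ∀ (W : Type) (F : Frame W) (g : Nat → Set W),
      IsIELmFrame F → (re → KnowCond F) → (∀ n, g n ∈ F.P) → F.wbot ∈ interpFmE F g φ :=
  ⟨fun h _ _ _ hF hK hg => h.mem_interpFmE hF hK hg _, IELThm.of_forall_frame⟩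

/-- Soundness and completeness of `IEL⁻` and `IEL` w.r.t.
relational semantics: a formula `φ ∈ Fm_e` is a theorem of `IEL⁻` (resp. `IEL`)
iff `φ` is true (i.e. satisfied at the bottom world `w_⊥`) in all relational
`IEL⁻`-models (resp. `IEL`-models). -/
theorem stmt18 :
    (∀ φ : FmE, IELThm False φ ↔
      ∀ (W : Type) (F : Frame W) (g : Nat → Set W),
        IsIELmFrame F → (∀ n, g n ∈ F.P) → F.wbot ∈ interpFmE F g φ) ∧
    (∀ φ : FmE, IELThm True φ ↔
      ∀ (W : Type) (F : Frame W) (g : Nat → Set W),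
        IsIELFrame F → (∀ n, g n ∈ F.P) → F.wbot ∈ interpFmE F g φ) := by
  refine ⟨fun φ => ielThm_iff_forall_frame.trans ?_, fun φ => ielThm_iff_forall_frame.trans ?_⟩
  · simp only [false_implies, forall_const]
  · simp only [IsIELFrame, forall_const, and_imp]
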